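/- arXiv:2106.11510 — 2 statements merged into one kernel-verified Lean document; each statement's English description precedes it below -/
import Mathlib

section
/- Suppose M(t,x;λ) is a smooth solution of the Merton PDE M_t − (1/2)λ² M_x²/M_{xx} = 0 with M_{xx} < 0, and let R = −M_x/M_{xx}. Then R satisfies the nonlinear PDE R_t + (1/2)λ² R² R_{xx} = 0 on the domain where M is defined. -/
open Set

private lemma pd2 {g : ℝ × ℝ → ℝ} (hg : Differentiable ℝ g) (t x : ℝ) :
    HasDerivAt (fun y => g (t, y)) (fderiv ℝ g (t, x) (0, 1)) x :=
  (hg (t, x)).hasFDerivAt.comp_hasDerivAt x ((hasDerivAt_const x t).prodMk (hasDerivAt_id x))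

private lemma pd1 {g : ℝ × ℝ → ℝ} (hg : Differentiable ℝ g) (t x : ℝ) :
    HasDerivAt (fun s => g (s, x)) (fderiv ℝ g (t, x) (1, 0)) t :=
  (hg (t, x)).hasFDerivAt.comp_hasDerivAt t ((hasDerivAt_id t).prodMk (hasDerivAt_const t x))

private lemma smooth_pd {g : ℝ × ℝ → ℝ} (hg : ContDiff ℝ (⊤ : ℕ∞) g) (a : ℝ × ℝ) :
    ContDiff ℝ (⊤ : ℕ∞) (fun p => fderiv ℝ g p a) :=
  (ContinuousLinearMap.apply ℝ ℝ a).contDiff.comp (hg.fderiv_right (by simp))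

private lemma clairaut {g : ℝ × ℝ → ℝ} (hg : ContDiff ℝ (⊤ : ℕ∞) g) (p a b : ℝ × ℝ) :
    fderiv ℝ (fun q => fderiv ℝ g q a) p b = fderiv ℝ (fun q => fderiv ℝ g q b) p a := by
  have hsymm : IsSymmSndFDerivAt ℝ g p := hg.contDiffAt.isSymmSndFDerivAt (by rw [minSmoothness_of_isRCLikeNormedField]; exact WithTop.coe_le_coe.mpr (le_top : (2:ℕ∞) ≤ ⊤))
  have hd : HasFDerivAt (fderiv ℝ g) (fderiv ℝ (fderiv ℝ g) p) p :=
    (((hg.fderiv_right (m := (⊤ : ℕ∞)) (by simp)).differentiable (by simp)) p).hasFDerivAt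
  have key : ∀ c : ℝ × ℝ, fderiv ℝ (fun q => fderiv ℝ g q c) p
      = (ContinuousLinearMap.apply ℝ ℝ c).comp (fderiv ℝ (fderiv ℝ g) p) :=
    fun c => ((ContinuousLinearMap.apply ℝ ℝ c).hasFDerivAt.comp p hd).fderiv
  rw [key a, key b]
  simp only [ContinuousLinearMap.coe_comp', Function.comp_apply,
    ContinuousLinearMap.apply_apply]
  exact hsymm.eq b a

/-- If `M` is a smooth solution of the Merton PDE with `M_x > 0`, `M_{xx} < 0`,
then the risk tolerance `R = -M_x/M_{xx}` satisfies `R_t + (1/2)λ² R² R_{xx} = 0`. -/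
theorem risk_tolerance_pde
    (T lam : ℝ) (hT : 0 < T) (hlam : 0 < lam)
    (M : ℝ → ℝ → ℝ)
    (hM : ContDiff ℝ (⊤ : ℕ∞) (fun p : ℝ × ℝ => M p.1 p.2))
    (hMx : ∀ t ∈ Icc (0:ℝ) T, ∀ x ∈ Ioi (0:ℝ), 0 < deriv (M t) x)
    (hMxx : ∀ t ∈ Icc (0:ℝ) T, ∀ x ∈ Ioi (0:ℝ), deriv (deriv (M t)) x < 0)
    (hPDE : ∀ t ∈ Icc (0:ℝ) T, ∀ x ∈ Ioi (0:ℝ),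
      deriv (fun s => M s x) t
        - (1/2) * lam^2 * (deriv (M t) x)^2 / deriv (deriv (M t)) x = 0) :
    ∀ t ∈ Icc (0:ℝ) T, ∀ x ∈ Ioi (0:ℝ),
      deriv (fun s => - deriv (M s) x / deriv (deriv (M s)) x) t
        + (1/2) * lam^2 * (- deriv (M t) x / deriv (deriv (M t)) x)^2
          * deriv (deriv (fun y => - deriv (M t) y / deriv (deriv (M t)) y)) x = 0 := by
  intro t ht x hx
  have hF : ContDiff ℝ (⊤ : ℕ∞) (fun p : ℝ × ℝ => M p.1 p.2) := hM
  set u : ℝ × ℝ → ℝ := fun p => fderiv ℝ (fun p : ℝ × ℝ => M p.1 p.2) p (0, 1) with hu_def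
  have hu : ContDiff ℝ (⊤ : ℕ∞) u := smooth_pd hF _
  set v : ℝ × ℝ → ℝ := fun p => fderiv ℝ u p (0, 1) with hv_def
  have hv : ContDiff ℝ (⊤ : ℕ∞) v := smooth_pd hu _
  set w : ℝ × ℝ → ℝ := fun p => fderiv ℝ v p (0, 1) with hw_def
  have hw : ContDiff ℝ (⊤ : ℕ∞) w := smooth_pd hv _
  set m : ℝ × ℝ → ℝ := fun p => fderiv ℝ (fun p : ℝ × ℝ => M p.1 p.2) p (1, 0) with hm_def
  have hm : ContDiff ℝ (⊤ : ℕ∞) m := smooth_pd hF _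
  set mx : ℝ × ℝ → ℝ := fun p => fderiv ℝ m p (0, 1) with hmx_def
  have hmx : ContDiff ℝ (⊤ : ℕ∞) mx := smooth_pd hm _
  set mxx : ℝ × ℝ → ℝ := fun p => fderiv ℝ mx p (0, 1) with hmxx_def
  -- basic slice facts
  have hMs : ∀ s y : ℝ, deriv (M s) y = u (s, y) := fun s y =>
    (pd2 (hF.differentiable (by simp)) s y).deriv
  have hMs2 : ∀ s : ℝ, deriv (M s) = fun y => u (s, y) := fun s => funext (hMs s)
  have hMss : ∀ s y : ℝ, deriv (deriv (M s)) y = v (s, y) := by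
    intro s y
    rw [hMs2 s]
    exact (pd2 (hu.differentiable (by simp)) s y).deriv
  have hVne : ∀ y ∈ Ioi (0:ℝ), v (t, y) ≠ 0 := by
    intro y hy
    have h := hMxx t ht y hy
    rw [hMss] at h
    exact ne_of_lt h
  have hV0 : v (t, x) ≠ 0 := hVne x hx
  -- the PDE in terms of u, v, m
  have hpde : ∀ y ∈ Ioi (0:ℝ),
      m (t, y) = 1/2 * lam^2 * (u (t, y) * u (t, y)) / v (t, y) := by
    intro y hy
    have h := hPDE t ht y hy
    have hm4 : deriv (fun s => M s y) t = m (t, y) :=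
      (pd1 (hF.differentiable (by simp)) t y).deriv
    rw [hm4, hMs, hMss] at h
    have h2 := sub_eq_zero.mp h
    rw [pow_two (u (t, y))] at h2
    exact h2
  -- Clairaut
  have hcl1 : ∀ p : ℝ × ℝ, fderiv ℝ u p (1, 0) = mx p := fun p =>
    clairaut hF p (0, 1) (1, 0)
  have hcl2 : ∀ p : ℝ × ℝ, fderiv ℝ v p (1, 0) = mxx p := by
    intro p
    have h1 : fderiv ℝ v p (1, 0) = fderiv ℝ (fun q => fderiv ℝ u q (1, 0)) p (0, 1) :=
      clairaut hu p (0, 1) (1, 0)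
    have h2 : (fun q : ℝ × ℝ => fderiv ℝ u q (1, 0)) = mx := funext hcl1
    rw [h1, h2]
  -- value of mx on the domain
  have hmxval : ∀ y ∈ Ioi (0:ℝ), mx (t, y) =
      (1/2 * lam^2 * (v (t, y) * u (t, y) + u (t, y) * v (t, y)) * v (t, y)
        - 1/2 * lam^2 * (u (t, y) * u (t, y)) * w (t, y)) / v (t, y) ^ 2 := by
    intro y hy
    have h1 : deriv (fun y' => m (t, y')) y = mx (t, y) :=
      (pd2 (hm.differentiable (by simp)) t y).deriv
    have hev : (fun y' => m (t, y')) =ᶠ[nhds y]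
        (fun y' => 1/2 * lam^2 * (u (t, y') * u (t, y')) / v (t, y')) := by
      filter_upwards [isOpen_Ioi.mem_nhds hy] with y' hy' using hpde y' hy'
    have hd : HasDerivAt (fun y' => 1/2 * lam^2 * (u (t, y') * u (t, y')) / v (t, y'))
        ((1/2 * lam^2 * (v (t, y) * u (t, y) + u (t, y) * v (t, y)) * v (t, y)
          - 1/2 * lam^2 * (u (t, y) * u (t, y)) * w (t, y)) / v (t, y) ^ 2) y :=
      (HasDerivAt.const_mul (1/2 * lam^2) ((pd2 (hu.differentiable (by simp)) t y).mul
        (pd2 (hu.differentiable (by simp)) t y))).div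
        (pd2 (hv.differentiable (by simp)) t y) (hVne y hy)
    rw [← h1, hev.deriv_eq, hd.deriv]
  -- slice derivatives at the point
  have hux := pd2 (hu.differentiable (by simp)) t x
  have hvx := pd2 (hv.differentiable (by simp)) t x
  have hwx := pd2 (hw.differentiable (by simp)) t x
  have hut := pd1 (hu.differentiable (by simp)) t x
  rw [hcl1] at hut
  have hvt := pd1 (hv.differentiable (by simp)) t x
  rw [hcl2] at hvt
  -- rewrite the goal in terms of u, v
  have e1 : (fun s => - deriv (M s) x / deriv (deriv (M s)) x)
      = fun s => - u (s, x) / v (s, x) := by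
    funext s; rw [hMs, hMss]
  have e2 : (fun y => - deriv (M t) y / deriv (deriv (M t)) y)
      = fun y => - u (t, y) / v (t, y) := by
    funext y; rw [hMs, hMss]
  rw [e1, e2, hMs t x, hMss t x]
  -- time derivative of R
  have hRt : HasDerivAt (fun s => - u (s, x) / v (s, x)) _ t := (hut.neg.div hvt hV0)
  rw [hRt.deriv]
  -- first space derivative of R on the domain
  have hev2 : deriv (fun y => - u (t, y) / v (t, y)) =ᶠ[nhds x]
      (fun y => (-v (t, y) * v (t, y) - -u (t, y) * w (t, y)) / v (t, y) ^ 2) := by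
    filter_upwards [isOpen_Ioi.mem_nhds hx] with y hy
    have hd : HasDerivAt (fun y' => - u (t, y') / v (t, y'))
        ((-v (t, y) * v (t, y) - -u (t, y) * w (t, y)) / v (t, y) ^ 2) y :=
      ((pd2 (hu.differentiable (by simp)) t y).neg).div
        (pd2 (hv.differentiable (by simp)) t y) (hVne y hy)
    exact hd.deriv
  rw [hev2.deriv_eq]
  -- second space derivative of R
  have hQd : HasDerivAt (fun y => (-v (t, y) * v (t, y) - -u (t, y) * w (t, y)) / v (t, y) ^ 2) _ x := (((hvx.neg.mul hvx).sub (hux.neg.mul hwx)).div (hvx.pow 2)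
    (pow_ne_zero 2 hV0))
  rw [hQd.deriv]
  -- value of mxx at the point
  have hmxx_x : deriv (fun y => mx (t, y)) x = mxx (t, x) :=
    (pd2 (hmx.differentiable (by simp)) t x).deriv
  have hev3 : (fun y => mx (t, y)) =ᶠ[nhds x]
      (fun y => (1/2 * lam^2 * (v (t, y) * u (t, y) + u (t, y) * v (t, y)) * v (t, y)
        - 1/2 * lam^2 * (u (t, y) * u (t, y)) * w (t, y)) / v (t, y) ^ 2) := by
    filter_upwards [isOpen_Ioi.mem_nhds hx] with y hy using hmxval y hy
  have hPd : HasDerivAt (fun y => (1/2 * lam^2 * (v (t, y) * u (t, y) + u (t, y) * v (t, y)) * v (t, y)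
        - 1/2 * lam^2 * (u (t, y) * u (t, y)) * w (t, y)) / v (t, y) ^ 2) _ x := (((((hvx.mul hux).add (hux.mul hvx)).const_mul (1/2 * lam^2)).mul hvx).sub
      (((hux.mul hux).const_mul (1/2 * lam^2)).mul hwx)).div (hvx.pow 2) (pow_ne_zero 2 hV0)
  rw [hmxval x hx, ← hmxx_x, hev3.deriv_eq, hPd.deriv]
  -- now pure algebra
  have r1 : fderiv ℝ u (t, x) (0, 1) = v (t, x) := rfl
  have r2 : fderiv ℝ v (t, x) (0, 1) = w (t, x) := rfl
  rw [r1, r2]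
  simp only [Pi.neg_apply, Pi.mul_apply, Pi.add_apply, Pi.sub_apply, Pi.pow_apply]
  push_cast
  field_simp
  ring
end

section
/- Let M(t,x;λ) solve the Merton PDE and define R = −M_x/M_{xx}, D_1 = R∂_x, D_2 = R²∂_{xx}, and L_{t,x}(λ) = ∂_t + (1/2)λ²D_2 + λ²D_1. Then the operators L_{t,x}(λ) and D_1 commute when applied to M: L_{t,x}(λ)(D_1 M) = D_1(L_{t,x}(λ) M) = 0. In particular D_1 M solves the linear PDE (∂_t + (1/2)λ²D_2 + λ²D_1)(D_1 M) = 0. -/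
open Set

section MertonAux

/-- Partial derivative in the second (space) coordinate. -/
noncomputable def pdx (f : ℝ × ℝ → ℝ) (p : ℝ × ℝ) : ℝ := fderiv ℝ f p (0, 1)

/-- Partial derivative in the first (time) coordinate. -/
noncomputable def pdt (f : ℝ × ℝ → ℝ) (p : ℝ × ℝ) : ℝ := fderiv ℝ f p (1, 0)

lemma contDiff_pdv {f : ℝ × ℝ → ℝ} (hf : ContDiff ℝ (⊤ : ℕ∞) f) (v : ℝ × ℝ) :
    ContDiff ℝ (⊤ : ℕ∞) (fun p => fderiv ℝ f p v) := by
  have h : ContDiff ℝ (⊤ : ℕ∞) (fderiv ℝ f) := hf.fderiv_right (by simp)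
  exact h.clm_apply contDiff_const

lemma contDiff_pdx {f : ℝ × ℝ → ℝ} (hf : ContDiff ℝ (⊤ : ℕ∞) f) :
    ContDiff ℝ (⊤ : ℕ∞) (pdx f) := contDiff_pdv hf _

lemma contDiff_pdt {f : ℝ × ℝ → ℝ} (hf : ContDiff ℝ (⊤ : ℕ∞) f) :
    ContDiff ℝ (⊤ : ℕ∞) (pdt f) := contDiff_pdv hf _

lemma hasDerivAt_slice_x {f : ℝ × ℝ → ℝ} (hf : Differentiable ℝ f) (t x : ℝ) :
    HasDerivAt (fun y => f (t, y)) (pdx f (t, x)) x := by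
  have h1 : HasFDerivAt f (fderiv ℝ f (t, x)) (t, x) := (hf (t, x)).hasFDerivAt
  have h2 : HasDerivAt (fun y : ℝ => ((t : ℝ), y)) ((0 : ℝ), (1 : ℝ)) x :=
    (hasDerivAt_const x t).prodMk (hasDerivAt_id x)
  exact h1.comp_hasDerivAt x h2

lemma hasDerivAt_slice_t {f : ℝ × ℝ → ℝ} (hf : Differentiable ℝ f) (t x : ℝ) :
    HasDerivAt (fun s => f (s, x)) (pdt f (t, x)) t := by
  have h1 : HasFDerivAt f (fderiv ℝ f (t, x)) (t, x) := (hf (t, x)).hasFDerivAt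
  have h2 : HasDerivAt (fun s : ℝ => (s, (x : ℝ))) ((1 : ℝ), (0 : ℝ)) t :=
    (hasDerivAt_id t).prodMk (hasDerivAt_const t x)
  exact h1.comp_hasDerivAt t h2

lemma clairaut_s2 {f : ℝ × ℝ → ℝ} (hf : ContDiff ℝ (⊤ : ℕ∞) f) (p : ℝ × ℝ) :
    pdt (pdx f) p = pdx (pdt f) p := by
  have hsym : IsSymmSndFDerivAt ℝ f p :=
    hf.contDiffAt.isSymmSndFDerivAt
      (by rw [minSmoothness_of_isRCLikeNormedField]; exact WithTop.coe_le_coe.mpr le_top)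
  have hdf : DifferentiableAt ℝ (fderiv ℝ f) p := by
    have h : ContDiff ℝ (⊤ : ℕ∞) (fderiv ℝ f) := hf.fderiv_right (by simp)
    exact (h.differentiable (by simp)) p
  have hx : HasFDerivAt (fderiv ℝ f) (fderiv ℝ (fderiv ℝ f) p) p := hdf.hasFDerivAt
  have e1 : ∀ v : ℝ × ℝ, HasFDerivAt (fun q => fderiv ℝ f q v)
      ((ContinuousLinearMap.apply ℝ ℝ v).comp (fderiv ℝ (fderiv ℝ f) p)) p :=
    fun v => (ContinuousLinearMap.apply ℝ ℝ v).hasFDerivAt.comp p hx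
  have e2 : pdt (pdx f) p = fderiv ℝ (fderiv ℝ f) p (1, 0) (0, 1) := by
    have h := (e1 (0, 1)).fderiv
    show fderiv ℝ (fun q => fderiv ℝ f q (0, 1)) p (1, 0) = _
    rw [h]; rfl
  have e3 : pdx (pdt f) p = fderiv ℝ (fderiv ℝ f) p (0, 1) (1, 0) := by
    have h := (e1 (1, 0)).fderiv
    show fderiv ℝ (fun q => fderiv ℝ f q (1, 0)) p (0, 1) = _
    rw [h]; rfl
  rw [e2, e3, hsym.eq]

end MertonAux

/-- Risk tolerance of a value function `M(t,x)`: `R = -M_x/M_{xx}`. -/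
noncomputable def Rtol (M : ℝ → ℝ → ℝ) (t x : ℝ) : ℝ :=
  - deriv (M t) x / deriv (deriv (M t)) x

/-- `D₁ f = R f_x` with risk tolerance built from `M`. -/
noncomputable def D1op (M f : ℝ → ℝ → ℝ) (t x : ℝ) : ℝ :=
  Rtol M t x * deriv (f t) x

/-- `L_{t,x}(λ) f = f_t + (1/2)λ² R² f_{xx} + λ² R f_x` with risk tolerance from `M`. -/
noncomputable def LtxOp (lam : ℝ) (M f : ℝ → ℝ → ℝ) (t x : ℝ) : ℝ :=
  deriv (fun s => f s x) t + (1/2) * lam^2 * (Rtol M t x)^2 * deriv (deriv (f t)) x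
    + lam^2 * Rtol M t x * deriv (f t) x

/-- `L_{t,x}(λ)` and `D₁` commute on the Merton solution:
`L_{t,x}(λ)(D₁ M) = D₁(L_{t,x}(λ) M) = 0`. -/
theorem Ltx_D1_commute_on_M
    (T lam : ℝ) (hT : 0 < T) (hlam : 0 < lam)
    (M : ℝ → ℝ → ℝ)
    (hM : ContDiff ℝ (⊤ : ℕ∞) (fun p : ℝ × ℝ => M p.1 p.2))
    (hMx : ∀ t ∈ Icc (0:ℝ) T, ∀ x ∈ Ioi (0:ℝ), 0 < deriv (M t) x)
    (hMxx : ∀ t ∈ Icc (0:ℝ) T, ∀ x ∈ Ioi (0:ℝ), deriv (deriv (M t)) x < 0)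
    (hPDE : ∀ t ∈ Icc (0:ℝ) T, ∀ x ∈ Ioi (0:ℝ),
      deriv (fun s => M s x) t
        - (1/2) * lam^2 * (deriv (M t) x)^2 / deriv (deriv (M t)) x = 0) :
    ∀ t ∈ Icc (0:ℝ) T, ∀ x ∈ Ioi (0:ℝ),
      LtxOp lam M (D1op M M) t x = 0 ∧ D1op M (LtxOp lam M M) t x = 0 := by
  intro t ht x hx
  set F : ℝ × ℝ → ℝ := fun p => M p.1 p.2 with hFdef
  have hFs : ContDiff ℝ (⊤ : ℕ∞) F := hM.of_le (by simp)
  have hFxs : ContDiff ℝ (⊤ : ℕ∞) (pdx F) := contDiff_pdx hFs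
  have hFxxs : ContDiff ℝ (⊤ : ℕ∞) (pdx (pdx F)) := contDiff_pdx hFxs
  have hFxxxs : ContDiff ℝ (⊤ : ℕ∞) (pdx (pdx (pdx F))) := contDiff_pdx hFxxs
  have hFd : Differentiable ℝ F := hFs.differentiable (by simp)
  have hFxd : Differentiable ℝ (pdx F) := hFxs.differentiable (by simp)
  have hFxxd : Differentiable ℝ (pdx (pdx F)) := hFxxs.differentiable (by simp)
  have hFxxxd : Differentiable ℝ (pdx (pdx (pdx F))) := hFxxxs.differentiable (by simp)
  have hFtd : Differentiable ℝ (pdt F) := (contDiff_pdt hFs).differentiable (by simp)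
  have hFtxd : Differentiable ℝ (pdt (pdx F)) := (contDiff_pdt hFxs).differentiable (by simp)
  -- translation between curried derivatives and partial derivatives
  have T1 : ∀ s y : ℝ, deriv (M s) y = pdx F (s, y) := fun s y =>
    (hasDerivAt_slice_x hFd s y).deriv
  have T2 : ∀ s y : ℝ, deriv (deriv (M s)) y = pdx (pdx F) (s, y) := by
    intro s y
    have e : deriv (M s) = fun y => pdx F (s, y) := funext (T1 s)
    rw [e]
    exact (hasDerivAt_slice_x hFxd s y).deriv
  have T3 : ∀ s y : ℝ, deriv (fun u => M u y) s = pdt F (s, y) := fun s y =>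
    (hasDerivAt_slice_t hFd s y).deriv
  -- nonvanishing of F_{xx} on the slice
  have hbne : ∀ y ∈ Ioi (0:ℝ), pdx (pdx F) (t, y) ≠ 0 := by
    intro y hy
    have h := hMxx t ht y hy
    rw [T2] at h
    exact ne_of_lt h
  have hbx : pdx (pdx F) (t, x) ≠ 0 := hbne x hx
  -- spatial slice derivatives
  have h1 : ∀ y : ℝ, HasDerivAt (fun y' => pdx F (t, y')) (pdx (pdx F) (t, y)) y :=
    fun y => hasDerivAt_slice_x hFxd t y
  have h2 : ∀ y : ℝ, HasDerivAt (fun y' => pdx (pdx F) (t, y')) (pdx (pdx (pdx F)) (t, y)) y :=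
    fun y => hasDerivAt_slice_x hFxxd t y
  have h3 : ∀ y : ℝ,
      HasDerivAt (fun y' => pdx (pdx (pdx F)) (t, y')) (pdx (pdx (pdx (pdx F))) (t, y)) y :=
    fun y => hasDerivAt_slice_x hFxxxd t y
  -- the PDE in partial-derivative form
  have hPt : ∀ y ∈ Ioi (0:ℝ), pdt F (t, y)
      = 1/2 * lam^2 * pdx F (t, y)^2 / pdx (pdx F) (t, y) := by
    intro y hy
    have h := hPDE t ht y hy
    rw [T1, T2, T3] at h
    linarith
  -- x-derivative of the PDE
  have hPtx : ∀ y ∈ Ioi (0:ℝ), pdx (pdt F) (t, y)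
      = 1/2 * lam^2 * (2 * pdx F (t, y) * pdx (pdx F) (t, y)^2
          - pdx F (t, y)^2 * pdx (pdx (pdx F)) (t, y)) / pdx (pdx F) (t, y)^2 := by
    intro y hy
    have e0 : pdx (pdt F) (t, y) = deriv (fun y' => pdt F (t, y')) y :=
      ((hasDerivAt_slice_x hFtd t y).deriv).symm
    have hEvt : (fun y' => pdt F (t, y'))
        =ᶠ[nhds y] (fun y' => 1/2 * lam^2 * pdx F (t, y')^2 / pdx (pdx F) (t, y')) :=
      Filter.eventuallyEq_of_mem (isOpen_Ioi.mem_nhds hy) hPt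
    rw [e0, hEvt.deriv_eq,
      (HasDerivAt.fun_div (HasDerivAt.const_mul (1/2 * lam^2) ((h1 y).fun_pow 2)) (h2 y)
        (hbne y hy)).deriv]
    have hb := hbne y hy
    field_simp
    ring
  -- mixed partials via Clairaut
  have hat2 : pdt (pdx F) (t, x)
      = 1/2 * lam^2 * (2 * pdx F (t, x) * pdx (pdx F) (t, x)^2
          - pdx F (t, x)^2 * pdx (pdx (pdx F)) (t, x)) / pdx (pdx F) (t, x)^2 := by
    rw [clairaut_s2 hFs (t, x)]
    exact hPtx x hx
  have hbt : pdt (pdx (pdx F)) (t, x)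
      = 1/2 * lam^2 * (2 * pdx (pdx F) (t, x)^4
          - 2 * pdx F (t, x) * pdx (pdx F) (t, x)^2 * pdx (pdx (pdx F)) (t, x)
          - pdx F (t, x)^2 * pdx (pdx F) (t, x) * pdx (pdx (pdx (pdx F))) (t, x)
          + 2 * pdx F (t, x)^2 * pdx (pdx (pdx F)) (t, x)^2) / pdx (pdx F) (t, x)^3 := by
    rw [clairaut_s2 hFxs (t, x)]
    have e0 : pdx (pdt (pdx F)) (t, x) = deriv (fun y => pdt (pdx F) (t, y)) x :=
      ((hasDerivAt_slice_x hFtxd t x).deriv).symm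
    have hfun : (fun y => pdt (pdx F) (t, y)) = (fun y => pdx (pdt F) (t, y)) :=
      funext fun y => clairaut_s2 hFs (t, y)
    have hEv2 : (fun y => pdx (pdt F) (t, y))
        =ᶠ[nhds x] (fun y => 1/2 * lam^2 * (2 * pdx F (t, y) * pdx (pdx F) (t, y)^2
          - pdx F (t, y)^2 * pdx (pdx (pdx F)) (t, y)) / pdx (pdx F) (t, y)^2) :=
      Filter.eventuallyEq_of_mem (isOpen_Ioi.mem_nhds hx) hPtx
    rw [e0, hfun, hEv2.deriv_eq,
      (HasDerivAt.fun_div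
        (HasDerivAt.const_mul (1/2 * lam^2)
          ((HasDerivAt.fun_mul (HasDerivAt.const_mul 2 (h1 x)) ((h2 x).fun_pow 2)).fun_sub
            (((h1 x).fun_pow 2).fun_mul (h3 x))))
        ((h2 x).fun_pow 2) (pow_ne_zero 2 hbx)).deriv]
    field_simp
    ring
  -- the function D₁M in partial-derivative form
  have hg : D1op M M = fun s y => -pdx F (s, y) / pdx (pdx F) (s, y) * pdx F (s, y) := by
    funext s y
    simp only [D1op, Rtol, T1, T2]
  constructor
  · -- first statement : L(D₁M) = 0
    -- time derivative of D₁M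
    have hT1' : HasDerivAt (fun s => pdx F (s, x)) (pdt (pdx F) (t, x)) t :=
      hasDerivAt_slice_t hFxd t x
    have hT2' : HasDerivAt (fun s => pdx (pdx F) (s, x)) (pdt (pdx (pdx F)) (t, x)) t :=
      hasDerivAt_slice_t hFxxd t x
    have hA := ((hT1'.fun_neg.fun_div hT2' hbx).fun_mul hT1').deriv
    -- space derivative of D₁M, in clean form, on the whole half-line
    have hBclean : ∀ y ∈ Ioi (0:ℝ),
        deriv (fun y' => -pdx F (t, y') / pdx (pdx F) (t, y') * pdx F (t, y')) y
        = (-2 : ℝ) * pdx F (t, y)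
          + pdx F (t, y)^2 * pdx (pdx (pdx F)) (t, y) / pdx (pdx F) (t, y)^2 := by
      intro y hy
      rw [(((h1 y).fun_neg.fun_div (h2 y) (hbne y hy)).fun_mul (h1 y)).deriv]
      have hb := hbne y hy
      field_simp
      ring
    have hEvB : (deriv (fun y' => -pdx F (t, y') / pdx (pdx F) (t, y') * pdx F (t, y')))
        =ᶠ[nhds x] (fun y => (-2 : ℝ) * pdx F (t, y)
          + pdx F (t, y)^2 * pdx (pdx (pdx F)) (t, y) / pdx (pdx F) (t, y)^2) :=
      Filter.eventuallyEq_of_mem (isOpen_Ioi.mem_nhds hx) hBclean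
    have hC := (HasDerivAt.fun_add (HasDerivAt.const_mul (-2 : ℝ) (h1 x))
      (HasDerivAt.fun_div (((h1 x).fun_pow 2).fun_mul (h3 x)) ((h2 x).fun_pow 2)
        (pow_ne_zero 2 hbx))).deriv
    simp only [LtxOp, Rtol, T1, T2, hg]
    rw [hA, hEvB.deriv_eq, hC, hBclean x hx, hat2, hbt]
    field_simp
    ring
  · -- second statement : D₁(LM) = 0
    have hzero : ∀ y ∈ Ioi (0:ℝ), LtxOp lam M M t y = 0 := by
      intro y hy
      simp only [LtxOp, Rtol, T1, T2, T3]
      rw [hPt y hy]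
      have hb := hbne y hy
      field_simp
      ring
    have hev0 : (LtxOp lam M M t) =ᶠ[nhds x] (fun _ => (0:ℝ)) :=
      Filter.eventuallyEq_of_mem (isOpen_Ioi.mem_nhds hx) hzero
    simp only [D1op]
    rw [hev0.deriv_eq, deriv_const]
    exact mul_zero _
end
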